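/- Let b : E → ℝ≥0 be a bid profile on the edges of a finite bipartite graph and S = Greedy(b). Let T be a matching and let b' : E → ℝ≥0 satisfy b'_t ≥ b_t for t ∈ T and b'_t = b_t for t ∉ T, and set S' = Greedy(b'). Then there exists a map φ : (T ∖ S') → S such that b_{φ(t)} ≥ b'_t for every t ∈ T ∖ S', and every x ∈ S has at most two preimages under φ. -/
import Mathlib


section Matching

variable {E U V : Type*}

/-- `S` is a matching: distinct edges in `S` have distinct `u`-endpoints and
distinct `v`-endpoints. -/
def IsMatching (eu : E → U) (ev : E → V) (S : Finset E) : Prop :=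
  ∀ s ∈ S, ∀ t ∈ S, s ≠ t → eu s ≠ eu t ∧ ev s ≠ ev t

instance [DecidableEq E] [DecidableEq U] [DecidableEq V] (eu : E → U) (ev : E → V)
    (S : Finset E) : Decidable (IsMatching eu ev S) :=
  decidable_of_iff (∀ s ∈ S, ∀ t ∈ S, s ≠ t → eu s ≠ eu t ∧ ev s ≠ ev t) Iff.rfl

/-- Insert an element into a list sorted w.r.t. `le`. -/
def insertSorted (le : E → E → Bool) (x : E) : List E → List E
  | [] => [x]
  | y :: r => if le x y then x :: y :: r else y :: insertSorted le x r

/-- Insertion sort w.r.t. `le`. -/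
def sortList (le : E → E → Bool) : List E → List E
  | [] => []
  | x :: r => insertSorted le x (sortList le r)

open Classical in
/-- The list of all edges in processing order for bid profile `b`:
decreasing bids, ties broken by the fixed linear order on `E`. -/
noncomputable def procList [Fintype E] [LinearOrder E] (b : E → ℝ) : List E :=
  sortList (fun s t => decide (b t < b s ∨ (b t = b s ∧ s ≤ t)))
    (Finset.univ : Finset E).toList

/-- Process a list of edges in order, greedily keeping each edge that preserves
the matching property. -/
noncomputable def greedyAux [DecidableEq E] [DecidableEq U] [DecidableEq V]
    (eu : E → U) (ev : E → V) : List E → Finset E → Finset E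
  | [], S => S
  | t :: r, S =>
      greedyAux eu ev r (if IsMatching eu ev (insert t S) then insert t S else S)

/-- The greedy matching for bid profile `b`: process the edges in decreasing order
of bids (ties broken by the fixed linear order on `E`), adding each edge whenever
the current set together with it is still a matching. -/
noncomputable def Greedy [Fintype E] [LinearOrder E] [DecidableEq U] [DecidableEq V]
    (eu : E → U) (ev : E → V) (b : E → ℝ) : Finset E :=
  greedyAux eu ev (procList b) ∅

end Matching

section AuxLemmas

variable {E U V : Type*}

lemma insertSorted_perm (le : E → E → Bool) (x : E) (l : List E) :
    List.Perm (insertSorted le x l) (x :: l) := by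
  induction l with
  | nil => simp [insertSorted]
  | cons y r ih =>
    simp only [insertSorted]
    split
    · exact List.Perm.refl _
    · exact (ih.cons y).trans (List.Perm.swap x y r)

lemma sortList_perm (le : E → E → Bool) (l : List E) : List.Perm (sortList le l) l := by
  induction l with
  | nil => simp [sortList]
  | cons x r ih => exact (insertSorted_perm le x (sortList le r)).trans (ih.cons x)

lemma insertSorted_pairwise (le : E → E → Bool)
    (htot : ∀ a b, le a b = true ∨ le b a = true)
    (htrans : ∀ a b c, le a b = true → le b c = true → le a c = true)
    (x : E) (l : List E) (hl : l.Pairwise (fun a b => le a b = true)) :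
    (insertSorted le x l).Pairwise (fun a b => le a b = true) := by
  induction l with
  | nil => simp [insertSorted]
  | cons y r ih =>
    rw [List.pairwise_cons] at hl
    obtain ⟨hy, hr⟩ := hl
    simp only [insertSorted]
    split
    · next h =>
      refine List.pairwise_cons.2 ⟨?_, List.pairwise_cons.2 ⟨hy, hr⟩⟩
      intro z hz
      rcases List.mem_cons.1 hz with rfl | hz
      · exact h
      · exact htrans x y z h (hy z hz)
    · next h =>
      refine List.pairwise_cons.2 ⟨?_, ih hr⟩
      intro z hz
      rcases List.mem_cons.1 ((insertSorted_perm le x r).mem_iff.1 hz) with rfl | hz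
      · rcases htot z y with h' | h'
        · exact absurd h' h
        · exact h'
      · exact hy z hz

lemma sortList_pairwise (le : E → E → Bool)
    (htot : ∀ a b, le a b = true ∨ le b a = true)
    (htrans : ∀ a b c, le a b = true → le b c = true → le a c = true)
    (l : List E) : (sortList le l).Pairwise (fun a b => le a b = true) := by
  induction l with
  | nil => simp [sortList]
  | cons x r ih => exact insertSorted_pairwise le htot htrans x _ ih

lemma subset_greedyAux [DecidableEq E] [DecidableEq U] [DecidableEq V]
    (eu : E → U) (ev : E → V) :
    ∀ (l : List E) (S : Finset E), S ⊆ greedyAux eu ev l S := by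
  intro l
  induction l with
  | nil => intro S; simp [greedyAux]
  | cons t r ih =>
    intro S
    show S ⊆ greedyAux eu ev r _
    by_cases h : IsMatching eu ev (insert t S)
    · rw [if_pos h]
      exact (Finset.subset_insert t S).trans (ih _)
    · rw [if_neg h]
      exact ih _

lemma isMatching_greedyAux [DecidableEq E] [DecidableEq U] [DecidableEq V]
    (eu : E → U) (ev : E → V) :
    ∀ (l : List E) (S : Finset E), IsMatching eu ev S →
      IsMatching eu ev (greedyAux eu ev l S) := by
  intro l
  induction l with
  | nil => intro S hS; simpa [greedyAux] using hS
  | cons t r ih =>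
    intro S hS
    show IsMatching eu ev (greedyAux eu ev r _)
    by_cases h : IsMatching eu ev (insert t S)
    · rw [if_pos h]; exact ih _ h
    · rw [if_neg h]; exact ih _ hS

lemma greedyAux_blocked [DecidableEq E] [DecidableEq U] [DecidableEq V]
    (eu : E → U) (ev : E → V) (Rl : E → E → Prop) :
    ∀ (l : List E), l.Pairwise Rl → ∀ (S : Finset E), IsMatching eu ev S →
      (∀ x ∈ S, ∀ e ∈ l, Rl x e) → ∀ e ∈ l, e ∉ greedyAux eu ev l S →
      ∃ x ∈ greedyAux eu ev l S, x ≠ e ∧ (eu x = eu e ∨ ev x = ev e) ∧ Rl x e := by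
  intro l
  induction l with
  | nil => intro _ S _ _ e he; simp at he
  | cons t r ih =>
    intro hl S hS hSl e he hne
    rw [List.pairwise_cons] at hl
    rcases List.mem_cons.1 he with rfl | her
    · -- e = t
      by_cases hm : IsMatching eu ev (insert e S)
      · exfalso
        apply hne
        show e ∈ greedyAux eu ev r _
        rw [if_pos hm]
        exact subset_greedyAux eu ev r _ (Finset.mem_insert_self e S)
      · have hres : greedyAux eu ev (e :: r) S = greedyAux eu ev r S := by
          show greedyAux eu ev r _ = _
          rw [if_neg hm]
        have hx : ∃ x ∈ S, x ≠ e ∧ (eu x = eu e ∨ ev x = ev e) := by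
          by_contra hc
          push_neg at hc
          apply hm
          intro s hs t' ht' hst
          rcases Finset.mem_insert.1 hs with hse | hs'
          · rcases Finset.mem_insert.1 ht' with hte | ht''
            · exact absurd (hse.trans hte.symm) hst
            · subst hse
              have h3 := hc t' ht'' (fun h => hst h.symm)
              exact ⟨fun h => h3.1 h.symm, fun h => h3.2 h.symm⟩
          · rcases Finset.mem_insert.1 ht' with hte | ht''
            · subst hte
              exact hc s hs' hst
            · exact hS s hs' t' ht'' hst
        obtain ⟨x, hxS, hxne, hxc⟩ := hx
        refine ⟨x, ?_, hxne, hxc, hSl x hxS e he⟩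
        rw [hres]
        exact subset_greedyAux eu ev r S hxS
    · -- e ∈ r
      have hstep : greedyAux eu ev (t :: r) S
          = greedyAux eu ev r (if IsMatching eu ev (insert t S) then insert t S else S) := rfl
      rw [hstep] at hne ⊢
      by_cases hm : IsMatching eu ev (insert t S)
      · rw [if_pos hm] at hne ⊢
        refine ih hl.2 _ hm ?_ e her hne
        intro x hx e' he'
        rcases Finset.mem_insert.1 hx with rfl | hx
        · exact hl.1 e' he'
        · exact hSl x hx e' (List.mem_cons_of_mem t he')
      · rw [if_neg hm] at hne ⊢
        exact ih hl.2 _ hS (fun x hx e' he' => hSl x hx e' (List.mem_cons_of_mem t he')) e her hne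

open Classical in
lemma procList_pairwise [Fintype E] [LinearOrder E] (c : E → ℝ) :
    (procList c).Pairwise (fun s t => c t < c s ∨ (c t = c s ∧ s ≤ t)) := by
  have h := sortList_pairwise (fun s t : E => decide (c t < c s ∨ (c t = c s ∧ s ≤ t)))
    (by
      intro a b
      simp only [decide_eq_true_eq]
      rcases lt_trichotomy (c a) (c b) with h | h | h
      · right; left; exact h
      · rcases le_total a b with h' | h'
        · left; right; exact ⟨h.symm, h'⟩
        · right; right; exact ⟨h, h'⟩
      · left; left; exact h)
    (by
      intro a b d
      simp only [decide_eq_true_eq]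
      rintro (h1 | ⟨h1, h1'⟩) (h2 | ⟨h2, h2'⟩)
      · left; exact h2.trans h1
      · left; rw [h2]; exact h1
      · left; rw [← h1]; exact h2
      · right; exact ⟨h2.trans h1, h1'.trans h2'⟩)
    (Finset.univ : Finset E).toList
  refine List.Pairwise.imp ?_ h
  intro a b hab
  simpa only [decide_eq_true_eq] using hab

lemma mem_procList [Fintype E] [LinearOrder E] (c : E → ℝ) (e : E) : e ∈ procList c := by
  unfold procList
  exact ((sortList_perm _ (Finset.univ : Finset E).toList).mem_iff).2 (by simp)

lemma greedy_isMatching [Fintype E] [LinearOrder E] [DecidableEq U] [DecidableEq V]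
    (eu : E → U) (ev : E → V) (c : E → ℝ) : IsMatching eu ev (Greedy eu ev c) := by
  apply isMatching_greedyAux
  intro s hs
  simp at hs

lemma greedy_blocked [Fintype E] [LinearOrder E] [DecidableEq U] [DecidableEq V]
    (eu : E → U) (ev : E → V) (c : E → ℝ) (e : E) (he : e ∉ Greedy eu ev c) :
    ∃ x ∈ Greedy eu ev c, x ≠ e ∧ (eu x = eu e ∨ ev x = ev e) ∧
      (c e < c x ∨ (c e = c x ∧ x ≤ e)) := by
  refine greedyAux_blocked eu ev _ (procList c) (procList_pairwise c) ∅ ?_ ?_ e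
    (mem_procList c e) he
  · intro s hs; simp at hs
  · intro x hx; simp at hx

lemma no_cycle {E : Type*} [LinearOrder E] {b b' : E → ℝ} {x s : E}
    (h1 : b s < b x ∨ (b s = b x ∧ x ≤ s))
    (h2 : b' x < b' s ∨ (b' x = b' s ∧ s ≤ x))
    (hbs : b' s = b s) (hbx : b x ≤ b' x) (hxs : x ≠ s) : False := by
  have hsx : b s ≤ b x := by rcases h1 with h | ⟨h, _⟩ <;> linarith
  have hxs' : b' x ≤ b' s := by rcases h2 with h | ⟨h, _⟩ <;> linarith
  rcases h1 with h | ⟨_, hle1⟩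
  · linarith
  rcases h2 with h | ⟨_, hle2⟩
  · linarith
  exact hxs (le_antisymm hle1 hle2)

end AuxLemmas


/-- **The charging map for greedy matchings.**  Let `b` be a nonnegative bid profile
with greedy matching `S = Greedy(b)`, let `T` be a matching, and let `b'` agree with
`b` off `T` and dominate `b` on `T`; let `S' = Greedy(b')`.  Then there is a map
`φ : T ∖ S' → S` with `b_{φ(t)} ≥ b'_t` for every `t ∈ T ∖ S'` such that every
`x ∈ S` has at most two preimages. -/
theorem greedy_matching_charging_map
    {E U V : Type*} [Fintype E] [LinearOrder E] [DecidableEq U] [DecidableEq V]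
    (eu : E → U) (ev : E → V)
    (b : E → ℝ) (hb : ∀ t, 0 ≤ b t)
    (T : Finset E) (hT : IsMatching eu ev T)
    (b' : E → ℝ) (hb'T : ∀ t ∈ T, b t ≤ b' t) (hb'nT : ∀ t ∉ T, b' t = b t) :
    ∃ φ : E → E,
      (∀ t ∈ T \ Greedy eu ev b', φ t ∈ Greedy eu ev b ∧ b' t ≤ b (φ t)) ∧
      (∀ x ∈ Greedy eu ev b,
        ((T \ Greedy eu ev b').filter (fun t => φ t = x)).card ≤ 2) := by
  classical
  set S : Finset E := Greedy eu ev b with hSdef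
  set S' : Finset E := Greedy eu ev b' with hS'def
  have hMS : IsMatching eu ev S := greedy_isMatching eu ev b
  have hMS' : IsMatching eu ev S' := greedy_isMatching eu ev b'
  have hbb' : ∀ e, b e ≤ b' e := by
    intro e
    by_cases he : e ∈ T
    · exact hb'T e he
    · exact (hb'nT e he).ge
  -- the blocker map for b'
  set σ : E → E := fun t =>
    if h : ∃ s, s ∈ S' ∧ s ≠ t ∧ (eu s = eu t ∨ ev s = ev t) ∧
        (b' t < b' s ∨ (b' t = b' s ∧ s ≤ t)) then h.choose else t with hσdef
  have hσ : ∀ t, t ∉ S' → (σ t ∈ S' ∧ σ t ≠ t ∧ (eu (σ t) = eu t ∨ ev (σ t) = ev t) ∧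
      (b' t < b' (σ t) ∨ (b' t = b' (σ t) ∧ σ t ≤ t))) := by
    intro t ht
    have h : ∃ s, s ∈ S' ∧ s ≠ t ∧ (eu s = eu t ∨ ev s = ev t) ∧
        (b' t < b' s ∨ (b' t = b' s ∧ s ≤ t)) := by
      obtain ⟨x, hx1, hx2, hx3, hx4⟩ := greedy_blocked eu ev b' t ht
      exact ⟨x, hx1, hx2, hx3, hx4⟩
    simp only [hσdef, dif_pos h]
    exact h.choose_spec
  have hσT : ∀ t ∈ T, t ∉ S' → σ t ∉ T := by
    intro t htT htS' hσT
    obtain ⟨h1, h2, h3, _⟩ := hσ t htS'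
    have := hT (σ t) hσT t htT h2
    rcases h3 with h | h
    · exact this.1 h
    · exact this.2 h
  -- the blocker map for b, mapping into S
  set ψ : E → E := fun s =>
    if s ∈ S then s
    else if h : ∃ x, x ∈ S ∧ x ≠ s ∧ (eu x = eu s ∨ ev x = ev s) ∧
        (b s < b x ∨ (b s = b x ∧ x ≤ s)) then h.choose else s with hψdef
  have hψblk : ∀ s, s ∉ S → (ψ s ∈ S ∧ ψ s ≠ s ∧ (eu (ψ s) = eu s ∨ ev (ψ s) = ev s) ∧
      (b s < b (ψ s) ∨ (b s = b (ψ s) ∧ ψ s ≤ s))) := by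
    intro s hs
    have h : ∃ x, x ∈ S ∧ x ≠ s ∧ (eu x = eu s ∨ ev x = ev s) ∧
        (b s < b x ∨ (b s = b x ∧ x ≤ s)) := by
      obtain ⟨x, hx1, hx2, hx3, hx4⟩ := greedy_blocked eu ev b s hs
      exact ⟨x, hx1, hx2, hx3, hx4⟩
    simp only [hψdef, if_neg hs, dif_pos h]
    exact h.choose_spec
  have hψmem : ∀ s, ψ s ∈ S := by
    intro s
    by_cases hs : s ∈ S
    · simpa only [hψdef, if_pos hs] using hs
    · exact (hψblk s hs).1
  have hψval : ∀ s, b s ≤ b (ψ s) := by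
    intro s
    by_cases hs : s ∈ S
    · simp only [hψdef, if_pos hs]; exact le_refl _
    · rcases (hψblk s hs).2.2.2 with h | ⟨h, _⟩ <;> linarith
  have hψid : ∀ s ∈ S, ψ s = s := by
    intro s hs; simp only [hψdef, if_pos hs]
  -- injectivity of ψ on S' \ T
  have hψinj : ∀ s, s ∈ S' → s ∉ T → ∀ s'', s'' ∈ S' → s'' ∉ T → ψ s = ψ s'' → s = s'' := by
    intro s hsS' hsT s'' hs''S' hs''T heq
    by_cases hss : s = s''
    · exact hss
    exfalso
    by_cases hs : s ∈ S <;> by_cases hs'' : s'' ∈ S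
    · rw [hψid s hs, hψid s'' hs''] at heq; exact hss heq
    · -- s ∈ S, s'' ∉ S : ψ s'' = s, a blocker of s'', conflicts with s'' in S'
      rw [hψid s hs] at heq
      obtain ⟨_, hx2, hx3, _⟩ := hψblk s'' hs''
      rw [← heq] at hx2 hx3
      have := hMS' s hsS' s'' hs''S' hss
      rcases hx3 with h | h
      · exact this.1 h
      · exact this.2 h
    · rw [hψid s'' hs''] at heq
      obtain ⟨_, hx2, hx3, _⟩ := hψblk s hs
      rw [heq] at hx2 hx3
      have := hMS' s'' hs''S' s hsS' (fun h => hss h.symm)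
      rcases hx3 with h | h
      · exact this.1 h
      · exact this.2 h
    · -- both not in S; common blocker x
      obtain ⟨hx1, hx2, hx3, hx4⟩ := hψblk s hs
      obtain ⟨hy1, hy2, hy3, hy4⟩ := hψblk s'' hs''
      rw [← heq] at hy2 hy3 hy4
      set x := ψ s with hxdef
      -- x not in S'
      have hxS' : x ∉ S' := by
        intro hxS'
        have h1 := hMS' x hxS' s hsS' hx2
        rcases hx3 with h | h
        · exact h1.1 h
        · exact h1.2 h
      obtain ⟨hz1, hz2, hz3, hz4⟩ := hσ x hxS'
      set z := σ x with hzdef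
      have hbx : b x ≤ b' x := hbb' x
      have hbs : b' s = b s := hb'nT s hsT
      have hbs'' : b' s'' = b s'' := hb'nT s'' hs''T
      -- which endpoint does z share with x?
      rcases hz3 with hz | hz
      · -- eu z = eu x
        rcases hx3 with hx | hx
        · -- eu x = eu s, so z conflicts with s at eu; z = s
          have hzs : z = s := by
            by_contra hzs
            exact (hMS' z hz1 s hsS' hzs).1 (hz.trans hx)
          rw [hzs] at hz4
          exact no_cycle hx4 hz4 hbs hbx hx2
        · -- ev x = ev s; use s'' side
          rcases hy3 with hy | hy
          · -- eu x = eu s''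
            have hzs : z = s'' := by
              by_contra hzs
              exact (hMS' z hz1 s'' hs''S' hzs).1 (hz.trans hy)
            rw [hzs] at hz4
            exact no_cycle hy4 hz4 hbs'' hbx hy2
          · -- ev x = ev s and ev x = ev s'' : s, s'' conflict
            exact (hMS' s hsS' s'' hs''S' hss).2 (hx.symm.trans hy)
      · -- ev z = ev x
        rcases hx3 with hx | hx
        · rcases hy3 with hy | hy
          · exact (hMS' s hsS' s'' hs''S' hss).1 (hx.symm.trans hy)
          · have hzs : z = s'' := by
              by_contra hzs
              exact (hMS' z hz1 s'' hs''S' hzs).2 (hz.trans hy)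
            rw [hzs] at hz4
            exact no_cycle hy4 hz4 hbs'' hbx hy2
        · have hzs : z = s := by
            by_contra hzs
            exact (hMS' z hz1 s hsS' hzs).2 (hz.trans hx)
          rw [hzs] at hz4
          exact no_cycle hx4 hz4 hbs hbx hx2
  -- the charging map
  refine ⟨fun t => ψ (σ t), ?_, ?_⟩
  · intro t ht
    rw [Finset.mem_sdiff] at ht
    obtain ⟨h1, h2, h3, h4⟩ := hσ t ht.2
    have hσnT : σ t ∉ T := hσT t ht.1 ht.2
    refine ⟨hψmem _, ?_⟩
    have e1 : b' t ≤ b' (σ t) := by rcases h4 with h | ⟨h, _⟩ <;> linarith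
    have e2 : b' (σ t) = b (σ t) := hb'nT _ hσnT
    calc b' t ≤ b' (σ t) := e1
      _ = b (σ t) := e2
      _ ≤ b (ψ (σ t)) := hψval _
  · intro x hx
    set F := (T \ S').filter (fun t => ψ (σ t) = x) with hFdef
    rcases Finset.eq_empty_or_nonempty F with hF | hF
    · simp [hF]
    obtain ⟨t₀, ht₀⟩ := hF
    have ht₀' := ht₀
    rw [hFdef, Finset.mem_filter, Finset.mem_sdiff] at ht₀'
    obtain ⟨⟨ht₀T, ht₀S'⟩, ht₀x⟩ := ht₀'
    set s₀ := σ t₀ with hs₀def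
    have hs₀ := hσ t₀ ht₀S'
    have hs₀T : s₀ ∉ T := hσT t₀ ht₀T ht₀S'
    have hkey : ∀ t ∈ F, σ t = s₀ := by
      intro t ht
      rw [hFdef, Finset.mem_filter, Finset.mem_sdiff] at ht
      obtain ⟨⟨htT, htS'⟩, htx⟩ := ht
      have hs := hσ t htS'
      have hsT : σ t ∉ T := hσT t htT htS'
      exact hψinj (σ t) hs.1 hsT s₀ hs₀.1 hs₀T (htx.trans ht₀x.symm)
    have hsub : F ⊆ T.filter (fun t => eu t = eu s₀) ∪ T.filter (fun t => ev t = ev s₀) := by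
      intro t ht
      have htF := ht
      rw [hFdef, Finset.mem_filter, Finset.mem_sdiff] at htF
      obtain ⟨⟨htT, htS'⟩, _⟩ := htF
      have hs := hσ t htS'
      rw [hkey t ht] at hs
      rcases hs.2.2.1 with h | h
      · exact Finset.mem_union_left _ (Finset.mem_filter.2 ⟨htT, h.symm⟩)
      · exact Finset.mem_union_right _ (Finset.mem_filter.2 ⟨htT, h.symm⟩)
    have hc1 : (T.filter (fun t => eu t = eu s₀)).card ≤ 1 := by
      rw [Finset.card_le_one]
      intro a ha c hc
      rw [Finset.mem_filter] at ha hc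
      by_contra hac
      exact (hT a ha.1 c hc.1 hac).1 (ha.2.trans hc.2.symm)
    have hc2 : (T.filter (fun t => ev t = ev s₀)).card ≤ 1 := by
      rw [Finset.card_le_one]
      intro a ha c hc
      rw [Finset.mem_filter] at ha hc
      by_contra hac
      exact (hT a ha.1 c hc.1 hac).2 (ha.2.trans hc.2.symm)
    calc F.card ≤ (T.filter (fun t => eu t = eu s₀) ∪ T.filter (fun t => ev t = ev s₀)).card :=
          Finset.card_le_card hsub
      _ ≤ (T.filter (fun t => eu t = eu s₀)).card + (T.filter (fun t => ev t = ev s₀)).card :=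
          Finset.card_union_le _ _
      _ ≤ 2 := by omega
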